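/- (Barrier closeness.) Fix j, δ > 0 small enough, and let φ_t^{δ,−} and φ_t^{δ,+} be the delta interface evolutions defined by: φ_0^{δ,−} = φ, φ_0^{δ,+} = max{φ, V_{(0,δj)}}, and for n ≥ 0: φ_t^{δ,±} = G_{t−nδ} φ_{nδ}^{δ,±} for t ∈ [nδ,(n+1)δ), φ_{nδ}^{δ,−} = max{φ_{nδ−}^{δ,−}, V_{(0,nδj)}}, φ_{nδ}^{δ,+} = max{φ_{nδ−}^{δ,+}, V_{(0,(n+1)δj)}}. Then for every k ≥ 0, sup_{r∈ℝ} |φ_{kδ}^{δ,+}(r) − φ_{kδ}^{δ,−}(r)| ≤ jδ. -/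

import Mathlib

/-!
The Gaussian kernel is a nonnegative density of mass one, so the heat semigroup is a contraction
for the sup distance, and so is `f ↦ max f V` for a fixed cone `V`. The cones used by the upper and
lower evolutions differ by exactly `jδ` at every step, and initially
`0 ≤ max φ (|·| + jδ) - φ ≤ jδ` because `φ ≥ |·|`; by induction the gap stays at most `jδ`.
-/

open MeasureTheory

/-- The Gaussian heat kernel. -/
noncomputable def gaussK (t r r' : ℝ) : ℝ :=
  Real.exp (-(r - r') ^ 2 / (2 * t)) / Real.sqrt (2 * Real.pi * t)

/-- The heat semigroup applied to an interface. -/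
noncomputable def heatEvol (t : ℝ) (f : ℝ → ℝ) (r : ℝ) : ℝ :=
  ∫ r', gaussK t r r' * f r'

/-- The delta⁻ interface evolution sampled at times `kδ`: start from `φ`, evolve
by the heat semigroup for time `δ`, then take the maximum with the rising cone
`|r| + kjδ`. -/
noncomputable def deltaMinus (j δ : ℝ) (φ : ℝ → ℝ) : ℕ → ℝ → ℝ
  | 0 => φ
  | k + 1 => fun r =>
      max (heatEvol δ (deltaMinus j δ φ k) r) (|r| + ((k : ℝ) + 1) * j * δ)

/-- The delta⁺ interface evolution sampled at times `kδ`: as delta⁻ but the cone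
update is anticipated by one step. -/
noncomputable def deltaPlus (j δ : ℝ) (φ : ℝ → ℝ) : ℕ → ℝ → ℝ
  | 0 => fun r => max (φ r) (|r| + j * δ)
  | k + 1 => fun r =>
      max (heatEvol δ (deltaPlus j δ φ k) r) (|r| + ((k : ℝ) + 2) * j * δ)

open scoped NNReal
open ProbabilityTheory

theorem abs_integral_mul_sub_integral_mul_le {α : Type*} [MeasurableSpace α] {μ : Measure α}
    {K f g : α → ℝ} (hK_nonneg : ∀ᵐ x ∂μ, 0 ≤ K x) (hK : Integrable K μ)
    (hK_mass : ∫ x, K x ∂μ ≤ 1) (hfg : AEStronglyMeasurable (fun x => f x - g x) μ)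
    {c : ℝ} (hc : 0 ≤ c) (hbound : ∀ᵐ x ∂μ, |f x - g x| ≤ c) :
    |∫ x, K x * f x ∂μ - ∫ x, K x * g x ∂μ| ≤ c := by
  have hle : ∀ᵐ x ∂μ, ‖K x * f x - K x * g x‖ ≤ c * K x := by
    filter_upwards [hK_nonneg, hbound] with x hKx hx
    rw [← mul_sub, Real.norm_eq_abs, abs_mul, abs_of_nonneg hKx, mul_comm c]
    exact mul_le_mul_of_nonneg_left hx hKx
  have hdiff : Integrable (fun x => K x * f x - K x * g x) μ :=
    (hK.const_mul c).mono' ((hK.aestronglyMeasurable.mul hfg).congr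
      (ae_of_all _ fun x => mul_sub (K x) (f x) (g x))) hle
  -- Without integrability both integrals are `0`: `K f` and `K g` differ by the integrable `hdiff`.
  by_cases hf : Integrable (fun x => K x * f x) μ
  · have hg : Integrable (fun x => K x * g x) μ :=
      (hf.sub hdiff).congr (ae_of_all _ fun x => sub_sub_cancel _ _)
    rw [← integral_sub hf hg]
    calc |∫ x, K x * f x - K x * g x ∂μ| ≤ ∫ x, c * K x ∂μ :=
          norm_integral_le_of_norm_le (hK.const_mul c) hle
      _ = c * ∫ x, K x ∂μ := integral_const_mul c _
      _ ≤ c := mul_le_of_le_one_right hc hK_mass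
  · have hg : ¬ Integrable (fun x => K x * g x) μ := fun hg =>
      hf ((hg.add hdiff).congr (ae_of_all _ fun x => add_sub_cancel _ _))
    simpa [integral_undef hf, integral_undef hg] using hc

theorem gaussK_eq_gaussianPDFReal (t : ℝ≥0) (r r' : ℝ) :
    gaussK t r r' = gaussianPDFReal r t r' := by
  rw [gaussK, gaussianPDFReal, div_eq_inv_mul, sub_sq_comm]

theorem continuous_uncurry_gaussK (t : ℝ) : Continuous (Function.uncurry (gaussK t)) := by
  unfold gaussK
  fun_prop

theorem Measurable.heatEvol {f : ℝ → ℝ} (hf : Measurable f) (t : ℝ) :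
    Measurable (heatEvol t f) :=
  ((continuous_uncurry_gaussK t).measurable.mul
    (hf.comp measurable_snd)).stronglyMeasurable.integral_prod_right'.measurable

theorem abs_heatEvol_sub_le {t c : ℝ} (ht : 0 < t) {f g : ℝ → ℝ} (hf : Measurable f)
    (hg : Measurable g) (hfg : ∀ r, |f r - g r| ≤ c) (r : ℝ) :
    |heatEvol t f r - heatEvol t g r| ≤ c := by
  lift t to ℝ≥0 using ht.le
  have ht : t ≠ 0 := by exact_mod_cast ht.ne'
  simp only [heatEvol, gaussK_eq_gaussianPDFReal]
  exact abs_integral_mul_sub_integral_mul_le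
    (ae_of_all _ (gaussianPDFReal_nonneg r t)) (integrable_gaussianPDFReal r t)
    (integral_gaussianPDFReal_eq_one r ht).le (hf.sub hg).aestronglyMeasurable
    ((abs_nonneg _).trans (hfg 0)) (ae_of_all _ hfg)

theorem measurable_deltaMinus (j δ : ℝ) {φ : ℝ → ℝ} (hφ : Measurable φ) :
    ∀ k, Measurable (deltaMinus j δ φ k)
  | 0 => hφ
  | k + 1 => ((measurable_deltaMinus j δ hφ k).heatEvol δ).max (measurable_abs.add_const _)

theorem measurable_deltaPlus (j δ : ℝ) {φ : ℝ → ℝ} (hφ : Measurable φ) :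
    ∀ k, Measurable (deltaPlus j δ φ k)
  | 0 => hφ.max (measurable_abs.add_const _)
  | k + 1 => ((measurable_deltaPlus j δ hφ k).heatEvol δ).max (measurable_abs.add_const _)

theorem delta_barriers_close_general (j δ : ℝ) (hj : 0 < j) (hδ : 0 < δ)
    (φ : ℝ → ℝ) (hlip : LipschitzWith 1 φ) (hge : ∀ r : ℝ, |r| ≤ φ r) :
    ∀ (k : ℕ) (r : ℝ), |deltaPlus j δ φ k r - deltaMinus j δ φ k r| ≤ j * δ := by
  have hφ : Measurable φ := hlip.continuous.measurable
  have hjδ : 0 ≤ j * δ := by positivity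
  intro k
  induction k with
  | zero =>
    intro r
    rw [deltaPlus, deltaMinus, abs_of_nonneg (sub_nonneg.2 (le_max_left _ _)), sub_le_iff_le_add']
    exact max_le (le_add_of_nonneg_right hjδ) (add_le_add_left (hge r) _)
  | succ k ih =>
    intro r
    have hheat := abs_heatEvol_sub_le hδ (measurable_deltaPlus j δ hφ k)
      (measurable_deltaMinus j δ hφ k) ih r
    have hcone : (|r| + ((k : ℝ) + 2) * j * δ) - (|r| + ((k : ℝ) + 1) * j * δ) = j * δ := by ring
    exact (abs_max_sub_max_le_max _ _ _ _).trans
      (max_le hheat (by rw [hcone, abs_of_nonneg hjδ]))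

/-- (Barrier closeness.) The upper and lower delta interface evolutions started
from the same initial interface `φ` stay within `jδ` of each other at all times
`kδ`. -/
theorem delta_barriers_close (j δ : ℝ) (hj : 0 < j) (hδ : 0 < δ)
    (φ : ℝ → ℝ) (hlip : LipschitzWith 1 φ) (hge : ∀ r : ℝ, |r| ≤ φ r)
    (hcone : ∃ M : ℝ, ∀ r : ℝ, M ≤ |r| → φ r = |r|) :
    ∀ (k : ℕ) (r : ℝ), |deltaPlus j δ φ k r - deltaMinus j δ φ k r| ≤ j * δ :=
  delta_barriers_close_general j δ hj hδ φ hlip hge
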